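/- (Energy stability of the LEQRK scheme, Theorem 3.1, fully discrete form.) Let V and W be finite-dimensional real inner product spaces, L : V → V self-adjoint positive semi-definite, G : V → V linear with ⟨v, Gv⟩ ≤ 0 for all v ∈ V, and D_1, …, D_s : V → W linear maps with adjoints D_i*. Let (a_{ij}), (b_i) be real Runge–Kutta coefficients satisfying the algebraic stability condition: b_i ≥ 0 for all i, and the matrix M_{ij} = b_i a_{ij} + b_j a_{ji} − b_i b_j is positive semi-definite. Let Δt ≥ 0, Φⁿ ∈ V, qⁿ ∈ W, and suppose Φ_i ∈ V, Q_i ∈ W, k_i ∈ V, l_i ∈ W satisfy, for i = 1, …, s: Φ_i = Φⁿ + Δt Σ_j a_{ij} k_j, Q_i = qⁿ + Δt Σ_j a_{ij} l_j, k_i = G(L Φ_i + 2 D_i* Q_i), l_i = D_i k_i; and set Φ^{n+1} = Φⁿ + Δt Σ_i b_i k_i, q^{n+1} = qⁿ + Δt Σ_i b_i l_i. Then (1/2)⟨Φ^{n+1}, LΦ^{n+1}⟩ + ‖q^{n+1}‖² ≤ (1/2)⟨Φⁿ, LΦⁿ⟩ + ‖qⁿ‖². -/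

import Mathlib

/-!
For any symmetric bilinear form `B`, one Runge–Kutta step `y₁ = y₀ + h ∑ bᵢ kᵢ` with stages
`Yᵢ = y₀ + h ∑ aᵢⱼ kⱼ` satisfies the identity
`B(y₁, y₁) = B(y₀, y₀) + 2h ∑ bᵢ B(Yᵢ, kᵢ) - h² ∑ Mᵢⱼ B(kᵢ, kⱼ)`.
Apply it to `⟪·, L ·⟫` for `Φ` and to the inner product for `q`. In the energy the middle
terms combine stagewise to `⟪wᵢ, G wᵢ⟫ ≤ 0` with `wᵢ = LΦᵢ + 2 Dᵢ* Qᵢ`, since `kᵢ = G wᵢ` and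
`⟪Qᵢ, lᵢ⟫ = ⟪Dᵢ* Qᵢ, kᵢ⟫`. The last terms are nonnegative: the Hadamard product of `M` with
the Gram matrix of the `kᵢ` (or `lᵢ`) is positive semidefinite by the Schur product theorem.
-/

open scoped InnerProductSpace
open Finset Matrix

namespace RungeKutta

variable {ι R : Type*} [Fintype ι]

def algebraicStabilityMatrix [CommRing R] (a : Matrix ι ι R) (b : ι → R) : Matrix ι ι R :=
  Matrix.of fun i j => b i * a i j + b j * a j i - b i * b j

theorem posSemidef_algebraicStabilityMatrix {a : Matrix ι ι ℝ} {b : ι → ℝ}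
    (h : ∀ x : ι → ℝ, 0 ≤ ∑ i, ∑ j, algebraicStabilityMatrix a b i j * x i * x j) :
    (algebraicStabilityMatrix a b).PosSemidef := by
  refine .of_dotProduct_mulVec_nonneg ?_ fun x => ?_
  · ext i j
    simp only [conjTranspose_apply, star_trivial, algebraicStabilityMatrix, of_apply]
    ring
  · simpa [dotProduct, mulVec, Finset.mul_sum, mul_comm, mul_left_comm] using h x

variable {E : Type*} [CommRing R] [AddCommGroup E] [Module R E]

theorem bilinForm_step_self_eq {B : LinearMap.BilinForm R E} (hB : B.IsSymm)
    (a : Matrix ι ι R) (b : ι → R) (h : R) (y₀ : E) (y k : ι → E)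
    (hy : ∀ i, y i = y₀ + h • ∑ j, a i j • k j) :
    B (y₀ + h • ∑ i, b i • k i) (y₀ + h • ∑ i, b i • k i) =
      B y₀ y₀ + 2 * h * ∑ i, b i * B (y i) (k i)
        - h ^ 2 * ∑ i, ∑ j, algebraicStabilityMatrix a b i j * B (k i) (k j) := by
  set S := ∑ i, b i • k i
  set T := ∑ i, ∑ j, b i * a i j * B (k j) (k i)
  have hstages : ∑ i, b i * B (y i) (k i) = B y₀ S + h * T := by
    simp only [hy, S, T, map_add, map_smul, map_sum, LinearMap.add_apply, LinearMap.smul_apply,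
      LinearMap.sum_apply, smul_eq_mul, mul_add, Finset.sum_add_distrib, Finset.mul_sum]
    congr 1
    exact Finset.sum_congr rfl fun i _ => Finset.sum_congr rfl fun j _ => by ring
  have hM : ∑ i, ∑ j, algebraicStabilityMatrix a b i j * B (k i) (k j) = 2 * T - B S S := by
    have hT : ∑ i, ∑ j, b i * a i j * B (k i) (k j) = T :=
      Finset.sum_congr rfl fun i _ => Finset.sum_congr rfl fun j _ => by rw [hB.eq]
    have hT' : ∑ i, ∑ j, b j * a j i * B (k i) (k j) = T := Finset.sum_comm
    have hSS : B S S = ∑ i, ∑ j, b i * b j * B (k i) (k j) := by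
      simp only [S, map_sum, map_smul, LinearMap.sum_apply, LinearMap.smul_apply, smul_eq_mul,
        Finset.mul_sum, mul_assoc]
      exact Finset.sum_congr rfl fun i _ => Finset.sum_congr rfl fun j _ => by rw [hB.eq]
    simp only [algebraicStabilityMatrix, of_apply, add_mul, sub_mul, Finset.sum_add_distrib,
      Finset.sum_sub_distrib, hT, hT', hSS]
    ring
  have hS : B S y₀ = B y₀ S := hB.eq _ _
  simp only [map_add, map_smul, LinearMap.add_apply, LinearMap.smul_apply, smul_eq_mul,
    hstages, hM, hS]
  ring

end RungeKutta

namespace LinearMap.BilinForm.IsPosSemidef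

variable {ι E : Type*} [Fintype ι] [AddCommGroup E] [Module ℝ E]
  {B : LinearMap.BilinForm ℝ E}

theorem posSemidef_gram (hB : B.IsPosSemidef) (v : ι → E) :
    (Matrix.of fun i j => B (v i) (v j)).PosSemidef := by
  refine .of_dotProduct_mulVec_nonneg ?_ fun x => ?_
  · ext i j
    exact hB.isSymm.eq (v j) (v i)
  · refine (hB.isNonneg.nonneg (∑ i, x i • v i)).trans_eq ?_
    simp only [map_sum, map_smul, LinearMap.sum_apply, LinearMap.smul_apply, smul_eq_mul,
      dotProduct, mulVec, of_apply, star_trivial, Finset.mul_sum]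
    rw [Finset.sum_comm]
    exact Finset.sum_congr rfl fun i _ => Finset.sum_congr rfl fun j _ => by ring

theorem sum_sum_mul_apply_nonneg (hB : B.IsPosSemidef) {M : Matrix ι ι ℝ} (hM : M.PosSemidef)
    (v : ι → E) : 0 ≤ ∑ i, ∑ j, M i j * B (v i) (v j) := by
  simpa [dotProduct, mulVec] using
    (hM.hadamard (hB.posSemidef_gram v)).dotProduct_mulVec_nonneg 1

end LinearMap.BilinForm.IsPosSemidef

open RungeKutta in
theorem leqrk_unconditional_energy_stability_general
    {V W : Type*} [NormedAddCommGroup V] [InnerProductSpace ℝ V]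
    [FiniteDimensional ℝ V]
    [NormedAddCommGroup W] [InnerProductSpace ℝ W] [FiniteDimensional ℝ W]
    (L : V →ₗ[ℝ] V) (hLsym : ∀ u v : V, ⟪L u, v⟫_ℝ = ⟪u, L v⟫_ℝ)
    (hLpos : ∀ u : V, 0 ≤ ⟪L u, u⟫_ℝ)
    (G : V →ₗ[ℝ] V) (hG : ∀ v : V, ⟪v, G v⟫_ℝ ≤ 0)
    (s : ℕ) (a : Fin s → Fin s → ℝ) (b : Fin s → ℝ)
    (hb : ∀ i, 0 ≤ b i)
    (hM : ∀ x : Fin s → ℝ,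
      0 ≤ ∑ i, ∑ j, (b i * a i j + b j * a j i - b i * b j) * x i * x j)
    (D : Fin s → V →ₗ[ℝ] W)
    (Δt : ℝ) (hΔt : 0 ≤ Δt) (Φn : V) (qn : W)
    (Φ : Fin s → V) (Q : Fin s → W) (k : Fin s → V) (l : Fin s → W)
    (hΦ : ∀ i, Φ i = Φn + Δt • ∑ j, a i j • k j)
    (hQ : ∀ i, Q i = qn + Δt • ∑ j, a i j • l j)
    (hk : ∀ i, k i = G (L (Φ i) + (2 : ℝ) • (LinearMap.adjoint (D i)) (Q i)))
    (hl : ∀ i, l i = D i (k i))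
    (Φn1 : V) (hΦn1 : Φn1 = Φn + Δt • ∑ i, b i • k i)
    (qn1 : W) (hqn1 : qn1 = qn + Δt • ∑ i, b i • l i) :
    (1/2) * ⟪Φn1, L Φn1⟫_ℝ + ‖qn1‖ ^ 2 ≤ (1/2) * ⟪Φn, L Φn⟫_ℝ + ‖qn‖ ^ 2 := by
  set BΦ : LinearMap.BilinForm ℝ V := (innerₗ V).compl₂ L
  set Bq : LinearMap.BilinForm ℝ W := innerₗ W
  have hBΦ : BΦ.IsPosSemidef :=
    ⟨⟨fun u v => (hLsym u v).symm.trans (real_inner_comm _ _)⟩,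
      ⟨fun u => (hLpos u).trans_eq (hLsym u u)⟩⟩
  have hBq : Bq.IsPosSemidef := LinearMap.BilinForm.isPosSemidef_iff.2 isPosSemidef_inner
  have hstage : ∀ i, BΦ (Φ i) (k i) + 2 * Bq (Q i) (l i) ≤ 0 := fun i =>
    calc BΦ (Φ i) (k i) + 2 * Bq (Q i) (l i)
        = ⟪L (Φ i) + (2 : ℝ) • (LinearMap.adjoint (D i)) (Q i), k i⟫_ℝ := by
          simp [BΦ, Bq, hl i, inner_add_left, real_inner_smul_left,
            LinearMap.adjoint_inner_left, hLsym]
      _ ≤ 0 := hk i ▸ hG _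
  have hdiss : Δt * (∑ i, b i * BΦ (Φ i) (k i) + 2 * ∑ i, b i * Bq (Q i) (l i)) ≤ 0 := by
    rw [Finset.mul_sum, ← Finset.sum_add_distrib]
    refine mul_nonpos_of_nonneg_of_nonpos hΔt (Finset.sum_nonpos fun i _ => ?_)
    linarith [mul_nonpos_of_nonneg_of_nonpos (hb i) (hstage i)]
  have hMpsd := posSemidef_algebraicStabilityMatrix hM
  have hΦdecay := hBΦ.sum_sum_mul_apply_nonneg hMpsd k
  have hqdecay := hBq.sum_sum_mul_apply_nonneg hMpsd l
  rw [← real_inner_self_eq_norm_sq, ← real_inner_self_eq_norm_sq]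
  change (1/2) * BΦ Φn1 Φn1 + Bq qn1 qn1 ≤ (1/2) * BΦ Φn Φn + Bq qn qn
  rw [hΦn1, hqn1, bilinForm_step_self_eq hBΦ.isSymm a b Δt Φn Φ k hΦ,
    bilinForm_step_self_eq hBq.isSymm a b Δt qn Q l hQ]
  linarith [mul_nonneg (sq_nonneg Δt) hΦdecay, mul_nonneg (sq_nonneg Δt) hqdecay]

/-- Theorem 3.1 (fully discrete form): the algebraically stable `s`-stage LEQRK
scheme is unconditionally energy stable: `ℱ(Φ^{n+1}, q^{n+1}) ≤ ℱ(Φⁿ, qⁿ)` where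
`ℱ(Φ, q) = (1/2)⟪Φ, LΦ⟫ + ‖q‖²`. -/
theorem leqrk_unconditional_energy_stability
    {V W : Type*} [NormedAddCommGroup V] [InnerProductSpace ℝ V]
    [FiniteDimensional ℝ V]
    [NormedAddCommGroup W] [InnerProductSpace ℝ W] [FiniteDimensional ℝ W]
    (L : V →ₗ[ℝ] V) (hLsym : ∀ u v : V, ⟪L u, v⟫_ℝ = ⟪u, L v⟫_ℝ)
    (hLpos : ∀ u : V, 0 ≤ ⟪L u, u⟫_ℝ)
    (G : V →ₗ[ℝ] V) (hG : ∀ v : V, ⟪v, G v⟫_ℝ ≤ 0)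
    (s : ℕ) (hs : 1 ≤ s) (a : Fin s → Fin s → ℝ) (b : Fin s → ℝ)
    (hb : ∀ i, 0 ≤ b i)
    (hM : ∀ x : Fin s → ℝ,
      0 ≤ ∑ i, ∑ j, (b i * a i j + b j * a j i - b i * b j) * x i * x j)
    (D : Fin s → V →ₗ[ℝ] W)
    (Δt : ℝ) (hΔt : 0 ≤ Δt) (Φn : V) (qn : W)
    (Φ : Fin s → V) (Q : Fin s → W) (k : Fin s → V) (l : Fin s → W)
    (hΦ : ∀ i, Φ i = Φn + Δt • ∑ j, a i j • k j)
    (hQ : ∀ i, Q i = qn + Δt • ∑ j, a i j • l j)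
    (hk : ∀ i, k i = G (L (Φ i) + (2 : ℝ) • (LinearMap.adjoint (D i)) (Q i)))
    (hl : ∀ i, l i = D i (k i))
    (Φn1 : V) (hΦn1 : Φn1 = Φn + Δt • ∑ i, b i • k i)
    (qn1 : W) (hqn1 : qn1 = qn + Δt • ∑ i, b i • l i) :
    (1/2) * ⟪Φn1, L Φn1⟫_ℝ + ‖qn1‖ ^ 2 ≤ (1/2) * ⟪Φn, L Φn⟫_ℝ + ‖qn‖ ^ 2 :=
  leqrk_unconditional_energy_stability_general L hLsym hLpos G hG s a b hb hM D Δt hΔt Φn qn Φ Q k l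
    hΦ hQ hk hl Φn1 hΦn1 qn1 hqn1
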